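/- arXiv:2206.04402 — 7 statements merged into one kernel-verified Lean document; each statement's English description precedes it below -/
import Mathlib

section
/- For n,k ≥ 0 with n ≥ kr, the r-truncated degenerate Stirling number of the second kind satisfies S_{2,λ}^{[r]}(n,kr) = (1/k!) ∑ n! (1)_{l₁,λ}(1)_{l₂,λ}⋯(1)_{l_k,λ} / (l₁! l₂! ⋯ l_k!), where the sum is over all tuples (l₁,…,l_k) of integers with each lᵢ ≥ r and l₁+⋯+l_k = n. -/
/-- Degenerate falling factorial `(x)_{n,μ} = ∏_{j=0}^{n-1} (x - jμ)`. -/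
noncomputable def dfall (x mu : ℝ) (n : ℕ) : ℝ := ∏ j ∈ Finset.range n, (x - j * mu)

/-- The degenerate exponential `e_λ^x(t) = (1+λt)^{x/λ} = ∑_n (x)_{n,λ} t^n/n!`
as a formal power series. -/
noncomputable def degExpPS (lam x : ℝ) : PowerSeries ℝ :=
  PowerSeries.mk fun n => dfall x lam n / n.factorial

/-- The truncation `∑_{l=0}^{r-1} (1)_{l,λ} t^l / l!`. -/
noncomputable def truncPoly (lam : ℝ) (r : ℕ) : PowerSeries ℝ :=
  ∑ l ∈ Finset.range r, PowerSeries.C (dfall 1 lam l / l.factorial) * PowerSeries.X ^ l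

/-- The `r`-truncated degenerate Stirling numbers of the second kind `S_{2,λ}^{[r]}(n, kr)`,
defined by `(1/k!)(e_λ(t) - ∑_{l<r} (1)_{l,λ} t^l/l!)^k = ∑_n S_{2,λ}^{[r]}(n,kr) t^n/n!`
(the coefficients below `n = kr` vanish automatically). -/
noncomputable def truncS (lam : ℝ) (r k n : ℕ) : ℝ :=
  n.factorial * ((k.factorial : ℝ)⁻¹ *
    PowerSeries.coeff n ((degExpPS lam 1 - truncPoly lam r) ^ k))

/-- The degenerate Stirling numbers of the second kind `S_{2,λ}(n,k)`, defined by
`(1/k!)(e_λ(t)-1)^k = ∑_{n≥k} S_{2,λ}(n,k) t^n/n!`. -/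
noncomputable def S2 (lam : ℝ) (n k : ℕ) : ℝ :=
  n.factorial * ((k.factorial : ℝ)⁻¹ * PowerSeries.coeff n ((degExpPS lam 1 - 1) ^ k))

/-- Tuple version of `PowerSeries.coeff_pow`. -/
theorem coeff_pow_tuple (k n : ℕ) (φ : PowerSeries ℝ) :
    PowerSeries.coeff n (φ ^ k) =
      ∑ l ∈ Finset.Nat.antidiagonalTuple k n, ∏ i, PowerSeries.coeff (l i) φ := by
  induction k generalizing n with
  | zero =>
    cases n with
    | zero => simp
    | succ m => simp [PowerSeries.coeff_one]
  | succ k ih =>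
    rw [pow_succ', PowerSeries.coeff_mul]
    have key : ∀ m, (Finset.Nat.antidiagonalTuple (k+1) m : Finset (Fin (k+1) → ℕ)) =
        (Finset.HasAntidiagonal.antidiagonal m).biUnion
          (fun p => (Finset.Nat.antidiagonalTuple k p.2).image (Fin.cons p.1)) := by
      intro m
      ext x
      simp only [Finset.Nat.mem_antidiagonalTuple, Finset.mem_biUnion, Finset.mem_image,
        Finset.HasAntidiagonal.mem_antidiagonal, Prod.exists]
      constructor
      · intro hx
        exact ⟨x 0, ∑ i, x (Fin.succ i), by rw [← hx, Fin.sum_univ_succ], Fin.tail x,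
          rfl, Fin.cons_self_tail x⟩
      · rintro ⟨a, b, hab, y, hy, rfl⟩
        rw [Fin.sum_univ_succ]
        simp only [Fin.cons_zero, Fin.cons_succ]
        omega
    rw [key n, Finset.sum_biUnion]
    · apply Finset.sum_congr rfl
      rintro ⟨a, b⟩ hab
      rw [Finset.sum_image, ih]
      · rw [Finset.mul_sum]
        apply Finset.sum_congr rfl
        intro y hy
        rw [Fin.prod_univ_succ]
        simp
      · intro y _ z _ hyz
        have := congrArg Fin.tail hyz
        simpa [Fin.tail_cons] using this
    · rintro ⟨a, b⟩ hab ⟨c, d⟩ hcd hne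
      simp only [Finset.disjoint_left, Finset.mem_image]
      rintro x ⟨y, hy, rfl⟩ ⟨z, hz, hzx⟩
      apply hne
      have h0 : c = a := by
        have := congrArg (fun f => f 0) hzx
        simpa using this
      subst h0
      have : d = b := by
        have := Finset.HasAntidiagonal.mem_antidiagonal.1 hab
        have := Finset.HasAntidiagonal.mem_antidiagonal.1 hcd
        omega
      simp_all

theorem coeff_diff (lam : ℝ) (r m : ℕ) :
    PowerSeries.coeff m (degExpPS lam 1 - truncPoly lam r) =
      if m < r then 0 else dfall 1 lam m / m.factorial := by
  rw [map_sub]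
  have h1 : PowerSeries.coeff m (degExpPS lam 1) = dfall 1 lam m / m.factorial := by
    simp [degExpPS]
  have h2 : PowerSeries.coeff m (truncPoly lam r) =
      if m < r then dfall 1 lam m / m.factorial else 0 := by
    rw [truncPoly, map_sum]
    simp only [PowerSeries.coeff_C_mul, PowerSeries.coeff_X_pow]
    simp only [mul_ite, mul_one, mul_zero, eq_comm (a := m)]
    rw [Finset.sum_ite_eq' (Finset.range r) m (fun l => dfall 1 lam l / (l.factorial : ℝ))]
    by_cases hm : m < r <;> simp [hm, Finset.mem_range]
  rw [h1, h2]
  by_cases hm : m < r <;> simp [hm]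

/-- Theorem 1: explicit multinomial expression for `S_{2,λ}^{[r]}(n,kr)` when `n ≥ kr`. -/
theorem truncS_eq_sum (lam : ℝ) (hlam : lam ≠ 0) (r : ℕ) (hr : 0 < r) (n k : ℕ)
    (h : k * r ≤ n) :
    truncS lam r k n =
      (k.factorial : ℝ)⁻¹ *
        ∑ l ∈ (Finset.Nat.antidiagonalTuple k n).filter (fun l => ∀ i, r ≤ l i),
          (n.factorial : ℝ) * ∏ i, dfall 1 lam (l i) / ((l i).factorial : ℝ) := by
  rw [truncS, coeff_pow_tuple]
  have key : ∑ l ∈ Finset.Nat.antidiagonalTuple k n,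
        ∏ i, PowerSeries.coeff (l i) (degExpPS lam 1 - truncPoly lam r) =
      ∑ l ∈ (Finset.Nat.antidiagonalTuple k n).filter (fun l => ∀ i, r ≤ l i),
        ∏ i, dfall 1 lam (l i) / ((l i).factorial : ℝ) := by
    rw [← Finset.sum_filter_of_ne (p := fun l : Fin k → ℕ => ∀ i, r ≤ l i)]
    · apply Finset.sum_congr rfl
      intro l hl
      rw [Finset.mem_filter] at hl
      apply Finset.prod_congr rfl
      intro i _
      rw [coeff_diff, if_neg (by exact Nat.not_lt.2 (hl.2 i))]
    · intro l _ hne i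
      by_contra hi
      apply hne
      apply Finset.prod_eq_zero (Finset.mem_univ i)
      rw [coeff_diff, if_pos (Nat.lt_of_not_le hi)]
  rw [key, Finset.mul_sum, Finset.mul_sum, Finset.mul_sum]
  apply Finset.sum_congr rfl
  intro l _
  ring
end

section
/- For n,k ≥ 0 and n ≥ kr, we have S_{2,λ}^{[r]}(n,kr) = (1/k!) ∑_{m=0}^{k} C(k,m)(-1)^m ∑_{l₁,…,l_m=0}^{r-1} n! (1)_{l₁,λ}⋯(1)_{l_m,λ} (k-m)_{n-l₁-⋯-l_m, λ} / (l₁!⋯l_m! (n-l₁-⋯-l_m)!), where terms with n - l₁-⋯-l_m < 0 are zero; moreover this expression vanishes for 0 ≤ n < kr. -/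
open Finset Polynomial PowerSeries

lemma descPoch_smeval_real (z : ℝ) (n : ℕ) :
    (descPochhammer ℤ n).smeval z = ∏ i ∈ Finset.range n, (z - i) := by
  induction n with
  | zero => simp
  | succ n ih =>
    rw [descPochhammer_succ_right, smeval_mul, ih, prod_range_succ, smeval_sub, smeval_X,
      smeval_natCast]
    simp

lemma dfall_eq (x lam : ℝ) (hlam : lam ≠ 0) (n : ℕ) :
    dfall x lam n = lam ^ n * (descPochhammer ℤ n).smeval (x / lam) := by
  rw [descPoch_smeval_real, dfall]
  calc ∏ j ∈ Finset.range n, (x - j * lam)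
      = ∏ j ∈ Finset.range n, lam * (x / lam - j) := by
        refine Finset.prod_congr rfl fun j _ => ?_
        field_simp
    _ = lam ^ n * ∏ i ∈ Finset.range n, (x / lam - i) := by
        rw [Finset.prod_mul_distrib, Finset.prod_const, Finset.card_range]

lemma dfall_vandermonde (lam : ℝ) (hlam : lam ≠ 0) (x y : ℝ) (n : ℕ) :
    dfall (x + y) lam n = ∑ ij ∈ Finset.HasAntidiagonal.antidiagonal n,
      (n.choose ij.1 : ℝ) * dfall x lam ij.1 * dfall y lam ij.2 := by
  rw [dfall_eq _ _ hlam, add_div, Ring.descPochhammer_smeval_add _ (Commute.all _ _)]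
  rw [Finset.mul_sum]
  refine Finset.sum_congr rfl fun ij hij => ?_
  rw [Finset.HasAntidiagonal.mem_antidiagonal] at hij
  rw [dfall_eq _ _ hlam, dfall_eq _ _ hlam, ← hij, pow_add]
  ring

lemma coeff_degExpPS (lam x : ℝ) (n : ℕ) :
    PowerSeries.coeff n (degExpPS lam x) = dfall x lam n / n.factorial := by
  simp [degExpPS]

lemma degExp_mul (lam : ℝ) (hlam : lam ≠ 0) (x y : ℝ) :
    degExpPS lam x * degExpPS lam y = degExpPS lam (x + y) := by
  ext n
  rw [PowerSeries.coeff_mul, coeff_degExpPS, dfall_vandermonde lam hlam]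
  rw [Finset.sum_div]
  refine Finset.sum_congr rfl fun ij hij => ?_
  rw [Finset.HasAntidiagonal.mem_antidiagonal] at hij
  rw [coeff_degExpPS, coeff_degExpPS, ← hij]
  have h : ((ij.1 + ij.2).choose ij.1 : ℝ) = ((ij.1 + ij.2).factorial : ℝ) /
      ((ij.1.factorial : ℝ) * (ij.2.factorial : ℝ)) := by
    rw [Nat.cast_choose ℝ (Nat.le_add_right _ _), Nat.add_sub_cancel_left]
  rw [h]
  have h1 : (ij.1.factorial : ℝ) ≠ 0 := Nat.cast_ne_zero.mpr ij.1.factorial_ne_zero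
  have h2 : (ij.2.factorial : ℝ) ≠ 0 := Nat.cast_ne_zero.mpr ij.2.factorial_ne_zero
  have h3 : ((ij.1 + ij.2).factorial : ℝ) ≠ 0 := Nat.cast_ne_zero.mpr (ij.1 + ij.2).factorial_ne_zero
  field_simp

lemma degExp_pow (lam : ℝ) (hlam : lam ≠ 0) (j : ℕ) :
    degExpPS lam 1 ^ j = degExpPS lam (j : ℝ) := by
  induction j with
  | zero =>
    ext n
    rw [pow_zero, coeff_degExpPS]
    cases n with
    | zero => simp [dfall]
    | succ n => simp [dfall, Finset.prod_range_succ']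
  | succ j ih =>
    rw [pow_succ, ih, degExp_mul lam hlam]
    congr 1
    push_cast; ring

lemma T_pow (lam : ℝ) (r m : ℕ) :
    truncPoly lam r ^ m = ∑ l ∈ Fintype.piFinset (fun _ : Fin m => Finset.range r),
      PowerSeries.C (∏ i, dfall 1 lam (l i) / ((l i).factorial : ℝ)) *
        PowerSeries.X ^ (∑ i, l i) := by
  rw [← Fin.prod_const m (truncPoly lam r)]
  simp only [truncPoly]
  rw [Finset.prod_univ_sum]
  refine Finset.sum_congr rfl fun l _ => ?_
  rw [Finset.prod_mul_distrib, ← map_prod, Finset.prod_pow_eq_pow_sum]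

lemma coeff_T_pow_mul (lam : ℝ) (hlam : lam ≠ 0) (r m p n : ℕ) :
    PowerSeries.coeff n (truncPoly lam r ^ m * degExpPS lam 1 ^ p) =
      ∑ l ∈ Fintype.piFinset (fun _ : Fin m => Finset.range r),
        (if (∑ i, l i) ≤ n then
          (∏ i, dfall 1 lam (l i) / ((l i).factorial : ℝ)) *
            (dfall (p : ℝ) lam (n - ∑ i, l i) / ((n - ∑ i, l i).factorial : ℝ))
        else 0) := by
  rw [T_pow, Finset.sum_mul, map_sum]
  refine Finset.sum_congr rfl fun l _ => ?_
  rw [mul_assoc, mul_comm (PowerSeries.X ^ (∑ i, l i)), PowerSeries.coeff_C_mul,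
    PowerSeries.coeff_mul_X_pow', degExp_pow lam hlam]
  split
  · rw [coeff_degExpPS]
  · rw [mul_zero]

lemma coeff_diff_pow_eq_zero (lam : ℝ) (r k n : ℕ) (hn : n < k * r) :
    PowerSeries.coeff n ((degExpPS lam 1 - truncPoly lam r) ^ k) = 0 := by
  have hd : (PowerSeries.X : PowerSeries ℝ) ^ r ∣ degExpPS lam 1 - truncPoly lam r := by
    rw [PowerSeries.X_pow_dvd_iff]
    intro m hm
    rw [map_sub, coeff_degExpPS, truncPoly, map_sum]
    have : ∀ l ∈ Finset.range r,
        PowerSeries.coeff m (PowerSeries.C (dfall 1 lam l / l.factorial) *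
          PowerSeries.X ^ l) = if m = l then dfall 1 lam l / l.factorial else 0 := by
      intro l _
      rw [PowerSeries.coeff_C_mul, PowerSeries.coeff_X_pow]
      split <;> simp
    rw [Finset.sum_congr rfl this, Finset.sum_ite_eq (Finset.range r) m, if_pos (Finset.mem_range.mpr hm)]
    ring
  have hdk : (PowerSeries.X : PowerSeries ℝ) ^ (r * k) ∣
      (degExpPS lam 1 - truncPoly lam r) ^ k := by
    rw [pow_mul]
    exact pow_dvd_pow_of_dvd hd k
  exact (PowerSeries.X_pow_dvd_iff.mp hdk) n (by rwa [Nat.mul_comm] at hn)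

/-- Theorem 2: an explicit expression which equals `S_{2,λ}^{[r]}(n,kr)` for `n ≥ kr`
and vanishes for `0 ≤ n < kr`. Terms with `n - (l₁+⋯+l_m) < 0` are zero. -/
theorem truncS_eq_binomial_sum (lam : ℝ) (hlam : lam ≠ 0) (r : ℕ) (hr : 0 < r) (n k : ℕ) :
    (k.factorial : ℝ)⁻¹ *
      ∑ m ∈ Finset.range (k + 1), (k.choose m : ℝ) * (-1 : ℝ) ^ m *
        ∑ l ∈ Fintype.piFinset (fun _ : Fin m => Finset.range r),
          (if (∑ i, l i) ≤ n then
            (n.factorial : ℝ) * (∏ i, dfall 1 lam (l i) / ((l i).factorial : ℝ)) *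
              dfall ((k : ℝ) - (m : ℝ)) lam (n - ∑ i, l i) / ((n - ∑ i, l i).factorial : ℝ)
          else 0)
    = if k * r ≤ n then truncS lam r k n else 0 := by

  have key : (k.factorial : ℝ)⁻¹ *
      ∑ m ∈ Finset.range (k + 1), (k.choose m : ℝ) * (-1 : ℝ) ^ m *
        ∑ l ∈ Fintype.piFinset (fun _ : Fin m => Finset.range r),
          (if (∑ i, l i) ≤ n then
            (n.factorial : ℝ) * (∏ i, dfall 1 lam (l i) / ((l i).factorial : ℝ)) *
              dfall ((k : ℝ) - (m : ℝ)) lam (n - ∑ i, l i) / ((n - ∑ i, l i).factorial : ℝ)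
          else 0)
      = truncS lam r k n := by
    rw [truncS]
    have hsub : degExpPS lam 1 - truncPoly lam r = -truncPoly lam r + degExpPS lam 1 := by
      ring
    rw [hsub, add_pow, map_sum]
    have h : ∑ m ∈ Finset.range (k + 1), (k.choose m : ℝ) * (-1 : ℝ) ^ m *
        ∑ l ∈ Fintype.piFinset (fun _ : Fin m => Finset.range r),
          (if (∑ i, l i) ≤ n then
            (n.factorial : ℝ) * (∏ i, dfall 1 lam (l i) / ((l i).factorial : ℝ)) *
              dfall ((k : ℝ) - (m : ℝ)) lam (n - ∑ i, l i) / ((n - ∑ i, l i).factorial : ℝ)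
          else 0)
        = (n.factorial : ℝ) * ∑ m ∈ Finset.range (k + 1),
            PowerSeries.coeff n
              ((-truncPoly lam r) ^ m * degExpPS lam 1 ^ (k - m) * ((k.choose m : ℕ) : PowerSeries ℝ)) := by
      rw [Finset.mul_sum]
      refine Finset.sum_congr rfl fun m hm => ?_
      rw [Finset.mem_range, Nat.lt_succ_iff] at hm
      have h2 : ((-1 : PowerSeries ℝ)) ^ m = PowerSeries.C ((-1 : ℝ) ^ m) := by
        rw [map_pow, map_neg, map_one]
      have h1 : (-truncPoly lam r) ^ m * degExpPS lam 1 ^ (k - m) *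
          ((k.choose m : ℕ) : PowerSeries ℝ) =
          PowerSeries.C ((-1 : ℝ) ^ m * (k.choose m : ℝ)) *
            (truncPoly lam r ^ m * degExpPS lam 1 ^ (k - m)) := by
        rw [map_mul, ← map_natCast (PowerSeries.C (R := ℝ)) (k.choose m), ← h2, neg_pow]
        ring
      rw [h1, PowerSeries.coeff_C_mul, coeff_T_pow_mul lam hlam, Nat.cast_sub hm]
      have S1 : (∑ l ∈ Fintype.piFinset (fun _ : Fin m => Finset.range r),
            (if (∑ i, l i) ≤ n then
              (n.factorial : ℝ) * (∏ i, dfall 1 lam (l i) / ((l i).factorial : ℝ)) *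
                dfall ((k : ℝ) - (m : ℝ)) lam (n - ∑ i, l i) / ((n - ∑ i, l i).factorial : ℝ)
            else 0))
          = (n.factorial : ℝ) * ∑ l ∈ Fintype.piFinset (fun _ : Fin m => Finset.range r),
            (if (∑ i, l i) ≤ n then
              (∏ i, dfall 1 lam (l i) / ((l i).factorial : ℝ)) *
                (dfall ((k : ℝ) - (m : ℝ)) lam (n - ∑ i, l i) /
                  ((n - ∑ i, l i).factorial : ℝ))
            else 0) := by
        rw [Finset.mul_sum]
        refine Finset.sum_congr rfl fun l _ => ?_
        split_ifs
        · ring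
        · rw [mul_zero]
      rw [S1]
      ring
    rw [h]
    ring
  rw [key]
  by_cases h : k * r ≤ n
  · rw [if_pos h]
  · rw [if_neg h, truncS, coeff_diff_pow_eq_zero lam r k n (by omega)]
    ring
end

section
/- Let β_{l,λ}^{[r-1,α]} denote the r-truncated degenerate Bernoulli numbers of positive integer order α. Then ∑_{l=0}^{n-αr} C(n,l) S_{2,λ}^{[r]}(n-l, αr) β_{l,λ}^{[r-1,α]} equals (αr)!/α! if n = αr, and equals 0 if n > αr. -/
section Aux

open Finset

lemma coeff_F_eq_zero (lam : ℝ) (r m : ℕ) (hm : m < r) :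
    PowerSeries.coeff m (degExpPS lam 1 - truncPoly lam r) = 0 := by
  rw [map_sub]
  have h1 : PowerSeries.coeff m (degExpPS lam 1) = dfall 1 lam m / m.factorial := by
    simp [degExpPS]
  have h2 : PowerSeries.coeff m (truncPoly lam r) = dfall 1 lam m / m.factorial := by
    unfold truncPoly
    rw [map_sum]
    rw [Finset.sum_eq_single m]
    · simp
    · intro l hl hne
      simp [PowerSeries.coeff_X_pow, Ne.symm hne]
    · intro h; exact absurd (Finset.mem_range.mpr hm) h
  rw [h1, h2, sub_self]

lemma coeff_Fpow_eq_zero (lam : ℝ) (r : ℕ) : ∀ k m : ℕ, m < k * r →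
    PowerSeries.coeff m ((degExpPS lam 1 - truncPoly lam r) ^ k) = 0 := by
  intro k
  induction k with
  | zero => intro m hm; omega
  | succ k ih =>
    intro m hm
    rw [add_mul, one_mul] at hm
    rw [pow_succ, PowerSeries.coeff_mul]
    apply Finset.sum_eq_zero
    intro p hp
    replace hp := Finset.HasAntidiagonal.mem_antidiagonal.mp hp
    by_cases h2 : p.2 < r
    · rw [coeff_F_eq_zero lam r _ h2, mul_zero]
    · rw [ih p.1 (by omega), zero_mul]

end Aux


lemma key_sum (lam : ℝ) (r α : ℕ) (b : ℕ → ℝ) (n : ℕ) :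
    ∑ l ∈ Finset.range (n + 1), (n.choose l : ℝ) * truncS lam r α (n - l) * b l =
      (n.factorial : ℝ) * ((α.factorial : ℝ))⁻¹ *
        PowerSeries.coeff n ((degExpPS lam 1 - truncPoly lam r) ^ α *
          PowerSeries.mk (fun m => b m / m.factorial)) := by
  rw [PowerSeries.coeff_mul, Finset.Nat.sum_antidiagonal_eq_sum_range_succ_mk, Finset.mul_sum]
  rw [← Finset.sum_range_reflect (fun l => (n.choose l : ℝ) * truncS lam r α (n - l) * b l) (n+1)]
  apply Finset.sum_congr rfl
  intro j hj
  have hjn : j ≤ n := by simpa using Nat.lt_succ_iff.mp (Finset.mem_range.mp hj)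
  simp only [Nat.add_sub_cancel, Nat.sub_sub_self hjn, Nat.choose_symm hjn,
    PowerSeries.coeff_mk]
  unfold truncS
  have h' : (n.choose j : ℝ) * j.factorial * (n - j).factorial = n.factorial := by
    exact_mod_cast congrArg (Nat.cast : ℕ → ℝ) (Nat.choose_mul_factorial_mul_factorial hjn)
  rw [← h']
  have hα : (α.factorial : ℝ) ≠ 0 := Nat.cast_ne_zero.mpr (Nat.factorial_ne_zero α)
  have hnj : ((n - j).factorial : ℝ) ≠ 0 := Nat.cast_ne_zero.mpr (Nat.factorial_ne_zero _)
  field_simp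

/-- The orthogonality-type relation between the `r`-truncated degenerate Bernoulli numbers
`β_{l,λ}^{[r-1,α]}` of order `α` (defined by the generating relation in `hb`) and the
`r`-truncated degenerate Stirling numbers of the second kind. -/
theorem truncBernoulli_truncS_orthogonality (lam : ℝ) (hlam : lam ≠ 0)
    (r α : ℕ) (hr : 0 < r) (hα : 0 < α) (b : ℕ → ℝ)
    (hb : (PowerSeries.X : PowerSeries ℝ) ^ (α * r) =
      (degExpPS lam 1 - truncPoly lam r) ^ α *
        PowerSeries.mk (fun n => b n / n.factorial)) (n : ℕ) :
    (n = α * r →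
      ∑ l ∈ Finset.range (n - α * r + 1), (n.choose l : ℝ) * truncS lam r α (n - l) * b l =
        ((α * r).factorial : ℝ) / (α.factorial : ℝ)) ∧
    (α * r < n →
      ∑ l ∈ Finset.range (n - α * r + 1), (n.choose l : ℝ) * truncS lam r α (n - l) * b l = 0) := by
  have hext : α * r ≤ n →
      ∑ l ∈ Finset.range (n - α * r + 1), (n.choose l : ℝ) * truncS lam r α (n - l) * b l =
      ∑ l ∈ Finset.range (n + 1), (n.choose l : ℝ) * truncS lam r α (n - l) * b l := by
    intro hn
    apply Finset.sum_subset
    · intro x hx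
      simp only [Finset.mem_range] at *
      omega
    · intro x hx hx2
      simp only [Finset.mem_range] at hx hx2
      have hlt : n - x < α * r := by omega
      unfold truncS
      rw [coeff_Fpow_eq_zero lam r α _ hlt]
      ring
  constructor
  · intro h
    rw [hext (le_of_eq h.symm), key_sum, ← hb, PowerSeries.coeff_X_pow, if_pos h, mul_one]
    subst h
    rw [div_eq_mul_inv]
  · intro h
    rw [hext (le_of_lt h), key_sum, ← hb, PowerSeries.coeff_X_pow, if_neg (by omega), mul_zero]
end

section
/- The first r-truncated degenerate Bernoulli number (order 1) is β_{1,λ}^{[r-1,1]} = -(r!/(1)_{r,λ}) · (1-rλ)/(1+r). -/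
/-- The first `r`-truncated degenerate Bernoulli number (order 1):
`β_{1,λ}^{[r-1,1]} = -(r!/(1)_{r,λ}) (1-rλ)/(1+r)`. -/
theorem truncBernoulli_one (lam : ℝ) (hlam : lam ≠ 0) (r : ℕ) (hr : 0 < r)
    (hdf : dfall 1 lam r ≠ 0) (b : ℕ → ℝ)
    (hb : (PowerSeries.X : PowerSeries ℝ) ^ r =
      (degExpPS lam 1 - truncPoly lam r) *
        PowerSeries.mk (fun n => b n / n.factorial)) :
    b 1 = -((r.factorial : ℝ) / dfall 1 lam r) * (1 - r * lam) / (1 + r) := by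

  have hcoeff : ∀ n : ℕ, PowerSeries.coeff n (degExpPS lam 1 - truncPoly lam r) =
      if n < r then 0 else dfall 1 lam n / n.factorial := by
    intro n
    have ht : PowerSeries.coeff n (truncPoly lam r) =
        if n < r then dfall 1 lam n / n.factorial else 0 := by
      simp only [truncPoly, map_sum, PowerSeries.coeff_C_mul, PowerSeries.coeff_X_pow,
        mul_ite, mul_one, mul_zero]
      rw [Finset.sum_ite_eq (Finset.range r) n (fun l => dfall 1 lam l / l.factorial)]
      simp [Finset.mem_range]
    rw [map_sub, ht]
    by_cases h : n < r <;> simp [degExpPS, h]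
  have key : ∀ n : ℕ, PowerSeries.coeff n ((PowerSeries.X : PowerSeries ℝ) ^ r) =
      ∑ i ∈ Finset.range (n + 1),
        (PowerSeries.coeff i (degExpPS lam 1 - truncPoly lam r)) * (b (n - i) / (n - i).factorial) := by
    intro n
    rw [hb, PowerSeries.coeff_mul, Finset.Nat.sum_antidiagonal_eq_sum_range_succ_mk]
    simp [PowerSeries.coeff_mk]
  have hvanish : ∀ n : ℕ, ∑ i ∈ Finset.range r,
      (PowerSeries.coeff i (degExpPS lam 1 - truncPoly lam r)) * (b (n - i) / (n - i).factorial) = 0 := by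
    intro n
    apply Finset.sum_eq_zero
    intro i hi
    rw [hcoeff]
    simp [Finset.mem_range.mp hi]
  have h1 := key r
  rw [Finset.sum_range_succ, hvanish, zero_add, hcoeff] at h1
  simp only [lt_irrefl, if_false, Nat.sub_self, Nat.factorial_zero, Nat.cast_one, div_one,
    PowerSeries.coeff_X_pow, if_pos rfl, if_true] at h1
  have h2 := key (r + 1)
  rw [Finset.sum_range_succ, Finset.sum_range_succ, hvanish, zero_add, hcoeff, hcoeff] at h2
  simp only [lt_irrefl, if_false, Nat.lt_irrefl, Nat.add_sub_cancel_left, Nat.sub_self,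
    Nat.factorial_zero, Nat.factorial_one, Nat.cast_one, div_one,
    Nat.add_sub_cancel, PowerSeries.coeff_X_pow] at h2
  have hlt : ¬ (r + 1 < r) := by omega
  have hne : r + 1 ≠ r := by omega
  rw [if_neg hlt, if_neg hne] at h2
  have hd1 : dfall 1 lam (r + 1) = dfall 1 lam r * (1 - r * lam) := by
    simp [dfall, Finset.prod_range_succ]
  rw [hd1] at h2
  have hfac : ((r + 1).factorial : ℝ) = (r + 1) * r.factorial := by
    push_cast [Nat.factorial_succ]; ring
  rw [hfac] at h2
  have hfr : (r.factorial : ℝ) ≠ 0 := Nat.cast_ne_zero.mpr r.factorial_ne_zero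
  have hr1 : (1 + (r : ℝ)) ≠ 0 := by positivity
  have hr1' : ((r : ℝ) + 1) ≠ 0 := by positivity
  field_simp at h1 h2 ⊢
  have h2' : dfall 1 lam r * b 1 * ((r : ℝ) + 1) + dfall 1 lam r * (1 - r * lam) * b 0 = 0 := by
    apply mul_right_cancel₀ hfr
    linear_combination -((r.factorial : ℝ)) * h2
  linear_combination h2' + (1 - r*lam) * h1
end

section
/- For all n ≥ 0, ∑_{k=0}^{n} β_{k,λ} S_{1,λ}(n,k) = λ^n (1)_{n+1,1/λ} / (n+1), where S_{1,λ}(n,k) are the degenerate Stirling numbers of the first kind and β_{k,λ} the degenerate Bernoulli numbers. -/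
/-- The degenerate logarithm `log_λ(1+t) = ((1+t)^λ - 1)/λ` as a formal power series,
using the binomial expansion `(1+t)^λ = ∑_n (λ)_{n,1} t^n/n!`. -/
noncomputable def degLogPS (lam : ℝ) : PowerSeries ℝ :=
  (PowerSeries.mk (fun n => dfall lam 1 n / n.factorial) - 1) * PowerSeries.C lam⁻¹

/-- The degenerate Stirling numbers of the first kind `S_{1,λ}(n,k)`, defined by
`(1/k!)(log_λ(1+t))^k = ∑_{n≥k} S_{1,λ}(n,k) t^n/n!`. -/
noncomputable def S1 (lam : ℝ) (n k : ℕ) : ℝ :=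
  n.factorial * ((k.factorial : ℝ)⁻¹ * PowerSeries.coeff n (degLogPS lam ^ k))

open PowerSeries Finset

lemma dfall_zero (x mu : ℝ) : dfall x mu 0 = 1 := by simp [dfall]

lemma dfall_succ (x mu : ℝ) (n : ℕ) : dfall x mu (n+1) = dfall x mu n * (x - n * mu) := by
  simp [dfall, Finset.prod_range_succ]

lemma coeff_degLog (lam : ℝ) (n : ℕ) :
    PowerSeries.coeff n (degLogPS lam) =
      (dfall lam 1 n - if n = 0 then 1 else 0) / n.factorial * lam⁻¹ := by
  simp [degLogPS, PowerSeries.coeff_mul_C, PowerSeries.coeff_one, sub_div]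
  by_cases h : n = 0 <;> simp [h, sub_div]

lemma constCoeff_degLog (lam : ℝ) : PowerSeries.constantCoeff (degLogPS lam) = 0 := by
  rw [← PowerSeries.coeff_zero_eq_constantCoeff_apply, coeff_degLog]
  simp [dfall_zero]

lemma coeff_pow_degLog_eq_zero (lam : ℝ) {n k : ℕ} (h : n < k) :
    PowerSeries.coeff n (degLogPS lam ^ k) = 0 := by
  have hdvd : (PowerSeries.X : PowerSeries ℝ) ^ k ∣ degLogPS lam ^ k :=
    pow_dvd_pow_of_dvd (PowerSeries.X_dvd_iff.mpr (constCoeff_degLog lam)) k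
  exact PowerSeries.X_pow_dvd_iff.mp hdvd n h

lemma coeff_X_mul_derivative (f : PowerSeries ℝ) (n : ℕ) :
    PowerSeries.coeff n (PowerSeries.X * PowerSeries.derivative ℝ f) =
      n * PowerSeries.coeff n f := by
  cases n with
  | zero => simp
  | succ m => simp [PowerSeries.coeff_succ_X_mul, PowerSeries.coeff_derivative]; ring

lemma degLog_ODE (lam : ℝ) (hlam : lam ≠ 0) :
    (1 + PowerSeries.X) * PowerSeries.derivative ℝ (degLogPS lam) =
      PowerSeries.C lam * degLogPS lam + 1 := by
  ext n
  rw [add_mul, one_mul, map_add, map_add, coeff_X_mul_derivative,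
    PowerSeries.coeff_derivative, PowerSeries.coeff_C_mul]
  cases n with
  | zero =>
    simp [coeff_degLog, dfall_zero]
    rw [show dfall lam 1 1 = lam by rw [show (1:ℕ) = 0 + 1 from rfl, dfall_succ]; simp [dfall_zero]]
    field_simp
  | succ m =>
    have h1 : PowerSeries.coeff (m+1) (1 : PowerSeries ℝ) = 0 := by
      simp [PowerSeries.coeff_one]
    rw [h1, coeff_degLog, coeff_degLog, dfall_succ]
    have hm : ((m+1).factorial : ℝ) ≠ 0 := Nat.cast_ne_zero.mpr (Nat.factorial_ne_zero _)
    have hm2 : (((m+1)+1).factorial : ℝ) = ((m+2):ℝ) * (m+1).factorial := by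
      rw [Nat.factorial_succ]; push_cast; ring
    simp only [Nat.succ_ne_zero, if_false, sub_zero]
    rw [hm2]
    field_simp
    push_cast
    ring

lemma pow_rec (lam : ℝ) (hlam : lam ≠ 0) (k n : ℕ) :
    ((n:ℝ)+1) * PowerSeries.coeff (n+1) (degLogPS lam ^ (k+1))
      + n * PowerSeries.coeff n (degLogPS lam ^ (k+1))
    = ((k:ℝ)+1) * lam * PowerSeries.coeff n (degLogPS lam ^ (k+1))
      + ((k:ℝ)+1) * PowerSeries.coeff n (degLogPS lam ^ k) := by
  set L := degLogPS lam with hLdef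
  have key : (1 + PowerSeries.X) * PowerSeries.derivative ℝ (L ^ (k+1))
      = (k+1) • (PowerSeries.C lam * L ^ (k+1) + L ^ k) := by
    rw [Derivation.leibniz_pow, Nat.add_sub_cancel, mul_smul_comm]
    congr 1
    rw [smul_eq_mul]
    calc (1 + PowerSeries.X) * (L ^ k * PowerSeries.derivative ℝ L)
        = L ^ k * ((1 + PowerSeries.X) * PowerSeries.derivative ℝ L) := by ring
      _ = L ^ k * (PowerSeries.C lam * L + 1) := by rw [degLog_ODE lam hlam]
      _ = PowerSeries.C lam * L ^ (k+1) + L ^ k := by ring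
  have hc := congrArg (PowerSeries.coeff n) key
  rw [add_mul, one_mul, map_add, coeff_X_mul_derivative, PowerSeries.coeff_derivative,
    map_nsmul, map_add, PowerSeries.coeff_C_mul, nsmul_eq_mul] at hc
  push_cast at hc
  linear_combination hc

noncomputable def Fsum (lam : ℝ) (n : ℕ) : ℝ :=
  ∑ k ∈ Finset.range (n+1),
    dfall 1 lam k / k.factorial * PowerSeries.coeff n (degLogPS lam ^ k)

lemma nmul_coeff_one (n : ℕ) : (n : ℝ) * PowerSeries.coeff n (1 : PowerSeries ℝ) = 0 := by
  cases n with
  | zero => simp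
  | succ m => simp [PowerSeries.coeff_one]

lemma a_succ (lam : ℝ) (k : ℕ) :
    dfall 1 lam (k+1) / (k+1).factorial * ((k:ℝ)+1)
      = dfall 1 lam k / k.factorial * (1 - k * lam) := by
  rw [dfall_succ]
  have hk : ((k+1).factorial : ℝ) = ((k:ℝ)+1) * k.factorial := by
    rw [Nat.factorial_succ]; push_cast; ring
  have h1 : (k.factorial : ℝ) ≠ 0 := Nat.cast_ne_zero.mpr (Nat.factorial_ne_zero _)
  have h2 : ((k:ℝ)+1) ≠ 0 := by positivity
  rw [hk]
  field_simp

lemma Frec (lam : ℝ) (hlam : lam ≠ 0) (n : ℕ) :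
    ((n:ℝ)+1) * Fsum lam (n+1) = (1 - n) * Fsum lam n := by
  set L := degLogPS lam with hL
  set g : ℕ → ℕ → ℝ := fun m k => PowerSeries.coeff m (L ^ k) with hg
  set a : ℕ → ℝ := fun k => dfall 1 lam k / k.factorial with ha
  set h : ℕ → ℝ := fun j => a j * (((j:ℝ) * lam - n) * g n j) with hh
  have step1 : ((n:ℝ)+1) * Fsum lam (n+1)
      = ∑ k ∈ Finset.range (n+2), ((n:ℝ)+1) * (a k * g (n+1) k) := by
    rw [Fsum, Finset.mul_sum]
  have step2 : ∑ k ∈ Finset.range (n+2), ((n:ℝ)+1) * (a k * g (n+1) k)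
      = (∑ k ∈ Finset.range (n+1), ((n:ℝ)+1) * (a (k+1) * g (n+1) (k+1)))
        + ((n:ℝ)+1) * (a 0 * g (n+1) 0) :=
    Finset.sum_range_succ' _ (n+1)
  have hg0 : g (n+1) 0 = 0 := by
    simp [hg, PowerSeries.coeff_one]
  have step3 : ∀ k ∈ Finset.range (n+1),
      ((n:ℝ)+1) * (a (k+1) * g (n+1) (k+1))
        = h (k+1) + a k * ((1 - k * lam) * g n k) := by
    intro k _
    have hpr := pow_rec lam hlam k n
    have has := a_succ lam k
    simp only [hh, ha, hg]
    push_cast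
    linear_combination (dfall 1 lam (k+1) / ((k:ℕ)+1).factorial) * hpr
      + (PowerSeries.coeff n (L ^ k)) * has
  have step4 : ∑ k ∈ Finset.range (n+1), h (k+1)
      = (∑ k ∈ Finset.range (n+1), h k) + h (n+1) - h 0 := by
    have e1 : ∑ k ∈ Finset.range (n+2), h k
        = (∑ k ∈ Finset.range (n+1), h (k+1)) + h 0 := Finset.sum_range_succ' _ (n+1)
    have e2 : ∑ k ∈ Finset.range (n+2), h k
        = (∑ k ∈ Finset.range (n+1), h k) + h (n+1) := Finset.sum_range_succ _ (n+1)
    linarith [e1, e2]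
  have hhn1 : h (n+1) = 0 := by
    simp only [hh, hg]
    rw [coeff_pow_degLog_eq_zero lam (Nat.lt_succ_self n)]
    ring
  have hh0 : h 0 = -(n : ℝ) * g n 0 := by
    simp only [hh, ha]
    rw [dfall_zero]
    simp
  have hng0 : (n : ℝ) * g n 0 = 0 := by
    simp only [hg, pow_zero]
    exact nmul_coeff_one n
  rw [step1, step2, hg0, Finset.sum_congr rfl step3, Finset.sum_add_distrib, step4,
    hhn1, hh0]
  have : (∑ k ∈ Finset.range (n+1), h k)
        + (∑ k ∈ Finset.range (n+1), a k * ((1 - k * lam) * g n k))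
      = ∑ k ∈ Finset.range (n+1), (1 - (n:ℝ)) * (a k * g n k) := by
    rw [← Finset.sum_add_distrib]
    refine Finset.sum_congr rfl fun k _ => ?_
    simp only [hh]
    ring
  rw [Fsum, Finset.mul_sum]
  simp only [hg] at hng0
  simp only [← hL]
  linear_combination this + hng0

lemma Fval (lam : ℝ) (hlam : lam ≠ 0) (n : ℕ) :
    Fsum lam n = if n ≤ 1 then 1 else 0 := by
  induction n with
  | zero => simp [Fsum, dfall_zero]
  | succ m ih =>
    have hfrec := Frec lam hlam m
    rw [ih] at hfrec
    have hm1 : ((m:ℝ)+1) ≠ 0 := by positivity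
    cases m with
    | zero =>
      norm_num at hfrec ⊢
      linarith
    | succ k =>
      have hz : (1 - ((k+1:ℕ):ℝ)) * (if k+1 ≤ 1 then (1:ℝ) else 0) = 0 := by
        rcases Nat.eq_zero_or_pos k with hk | hk
        · subst hk; norm_num
        · rw [if_neg (by omega)]; ring
      rw [hz] at hfrec
      have h2 : (((k+1:ℕ)):ℝ) + 1 ≠ 0 := by positivity
      rw [if_neg (by omega)]
      rcases mul_eq_zero.mp hfrec with h | h
      · exact absurd h h2
      · exact h

/-- substitution of `degLogPS lam` into a power series, coefficient-wise. -/
noncomputable def subL (lam : ℝ) (U : PowerSeries ℝ) : PowerSeries ℝ :=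
  PowerSeries.mk fun n => ∑ k ∈ Finset.range (n+1),
    PowerSeries.coeff k U * PowerSeries.coeff n (degLogPS lam ^ k)

lemma tri_sum (n : ℕ) (s : ℕ → ℕ → ℝ) (hs : ∀ i j, n < i + j → s i j = 0) :
    ∑ m ∈ Finset.range (n+1), ∑ ij ∈ Finset.HasAntidiagonal.antidiagonal m, s ij.1 ij.2
      = ∑ i ∈ Finset.range (n+1), ∑ j ∈ Finset.range (n+1), s i j := by
  have hdisj : ((Finset.range (n+1) : Finset ℕ) : Set ℕ).PairwiseDisjoint
      (fun m => (Finset.HasAntidiagonal.antidiagonal m : Finset (ℕ × ℕ))) := by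
    intro x _ y _ hxy
    simp only [Function.onFun, Finset.disjoint_left]
    intro ij hx hy
    rw [Finset.HasAntidiagonal.mem_antidiagonal] at hx hy
    exact hxy (hx ▸ hy)
  rw [← Finset.sum_biUnion hdisj, ← Finset.sum_product']
  apply Finset.sum_subset
  · intro ij hij
    rw [Finset.mem_biUnion] at hij
    obtain ⟨m, hm, hijm⟩ := hij
    rw [Finset.mem_range] at hm
    rw [Finset.HasAntidiagonal.mem_antidiagonal] at hijm
    rw [Finset.mem_product, Finset.mem_range, Finset.mem_range]
    omega
  · intro ij _ hij
    apply hs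
    by_contra hle
    push_neg at hle
    exact hij (Finset.mem_biUnion.mpr ⟨ij.1 + ij.2, Finset.mem_range.mpr (by omega),
      Finset.HasAntidiagonal.mem_antidiagonal.mpr rfl⟩)

lemma subL_mul (lam : ℝ) (U V : PowerSeries ℝ) :
    subL lam (U * V) = subL lam U * subL lam V := by
  ext n
  rw [PowerSeries.coeff_mul, subL, PowerSeries.coeff_mk]
  set g : ℕ → ℕ → ℝ := fun m k => PowerSeries.coeff m (degLogPS lam ^ k) with hgdef
  have hright : ∀ pq ∈ Finset.HasAntidiagonal.antidiagonal n,
      PowerSeries.coeff pq.1 (subL lam U) * PowerSeries.coeff pq.2 (subL lam V)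
        = ∑ i ∈ Finset.range (n+1), ∑ j ∈ Finset.range (n+1),
            PowerSeries.coeff i U * PowerSeries.coeff j V * (g pq.1 i * g pq.2 j) := by
    intro pq hpq
    rw [Finset.HasAntidiagonal.mem_antidiagonal] at hpq
    rw [subL, subL, PowerSeries.coeff_mk, PowerSeries.coeff_mk]
    have h1 : ∑ k ∈ Finset.range (pq.1+1), PowerSeries.coeff k U * g pq.1 k
        = ∑ k ∈ Finset.range (n+1), PowerSeries.coeff k U * g pq.1 k := by
      apply Finset.sum_subset (Finset.range_subset_range.mpr (by omega))
      intro i _ hi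
      rw [Finset.mem_range, not_lt] at hi
      have hz : PowerSeries.coeff pq.1 (degLogPS lam ^ i) = 0 :=
        coeff_pow_degLog_eq_zero lam (by omega)
      simp only [hgdef, hz]
      ring
    have h2 : ∑ k ∈ Finset.range (pq.2+1), PowerSeries.coeff k V * g pq.2 k
        = ∑ k ∈ Finset.range (n+1), PowerSeries.coeff k V * g pq.2 k := by
      apply Finset.sum_subset (Finset.range_subset_range.mpr (by omega))
      intro i _ hi
      rw [Finset.mem_range, not_lt] at hi
      have hz : PowerSeries.coeff pq.2 (degLogPS lam ^ i) = 0 :=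
        coeff_pow_degLog_eq_zero lam (by omega)
      simp only [hgdef, hz]
      ring
    rw [h1, h2, Finset.sum_mul_sum]
    exact Finset.sum_congr rfl fun i _ => Finset.sum_congr rfl fun j _ => by ring
  rw [Finset.sum_congr rfl hright]
  rw [Finset.sum_comm]
  have hswap : ∀ i, ∑ pq ∈ Finset.HasAntidiagonal.antidiagonal n, ∑ j ∈ Finset.range (n+1),
      PowerSeries.coeff i U * PowerSeries.coeff j V * (g pq.1 i * g pq.2 j)
      = ∑ j ∈ Finset.range (n+1),
          PowerSeries.coeff i U * PowerSeries.coeff j V * g n (i + j) := by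
    intro i
    rw [Finset.sum_comm]
    refine Finset.sum_congr rfl fun j _ => ?_
    rw [← Finset.mul_sum]
    congr 1
    simp only [hgdef]
    rw [pow_add, PowerSeries.coeff_mul]
  rw [Finset.sum_congr rfl fun i _ => hswap i]
  have hleft : ∀ m ∈ Finset.range (n+1),
      PowerSeries.coeff m (U * V) * g n m
        = ∑ ij ∈ Finset.HasAntidiagonal.antidiagonal m,
            PowerSeries.coeff ij.1 U * PowerSeries.coeff ij.2 V * g n (ij.1 + ij.2) := by
    intro m _
    rw [PowerSeries.coeff_mul, Finset.sum_mul]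
    refine Finset.sum_congr rfl fun ij hij => ?_
    rw [Finset.HasAntidiagonal.mem_antidiagonal] at hij
    rw [hij]
  rw [Finset.sum_congr rfl hleft]
  exact tri_sum n (fun i j => PowerSeries.coeff i U * PowerSeries.coeff j V * g n (i + j))
    (fun i j hij => by
    have hz : PowerSeries.coeff n (degLogPS lam ^ (i + j)) = 0 :=
      coeff_pow_degLog_eq_zero lam hij
    simp only [hgdef, hz]
    ring)

lemma subL_one (lam : ℝ) : subL lam 1 = 1 := by
  ext n
  rw [subL, PowerSeries.coeff_mk]
  rw [Finset.sum_eq_single 0]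
  · simp
  · intro k _ hk
    rw [PowerSeries.coeff_one, if_neg hk]
    ring
  · intro h
    simp at h

lemma subL_X (lam : ℝ) : subL lam PowerSeries.X = degLogPS lam := by
  ext n
  rw [subL, PowerSeries.coeff_mk]
  rw [Finset.sum_eq_single 1]
  · cases n with
    | zero =>
      have h0 : PowerSeries.coeff 0 (degLogPS lam) = 0 := by
        rw [PowerSeries.coeff_zero_eq_constantCoeff, constCoeff_degLog]
      rw [pow_one, h0]
      ring
    | succ m => rw [PowerSeries.coeff_X, if_pos rfl, pow_one, one_mul]
  · intro k _ hk
    rw [PowerSeries.coeff_X, if_neg hk]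
    ring
  · intro h
    rw [Finset.mem_range, not_lt] at h
    have hz : PowerSeries.coeff n (degLogPS lam ^ 1) = 0 :=
      coeff_pow_degLog_eq_zero lam (by omega)
    rw [hz]
    ring

lemma subL_sub (lam : ℝ) (U V : PowerSeries ℝ) :
    subL lam (U - V) = subL lam U - subL lam V := by
  ext n
  rw [map_sub, subL, subL, subL, PowerSeries.coeff_mk, PowerSeries.coeff_mk,
    PowerSeries.coeff_mk, ← Finset.sum_sub_distrib]
  exact Finset.sum_congr rfl fun k _ => by rw [map_sub]; ring

lemma dfall_scale (lam : ℝ) (hlam : lam ≠ 0) (n : ℕ) :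
    dfall lam 1 n = lam ^ n * dfall 1 lam⁻¹ n := by
  induction n with
  | zero => rw [dfall_zero, dfall_zero]; simp
  | succ m ih =>
    rw [dfall_succ, dfall_succ, ih]
    have : lam - (m:ℝ) * 1 = lam * (1 - (m:ℝ) * lam⁻¹) := by
      field_simp
    rw [this]
    ring

lemma subL_degExp (lam : ℝ) (hlam : lam ≠ 0) :
    subL lam (degExpPS lam 1) = 1 + PowerSeries.X := by
  ext n
  rw [subL, PowerSeries.coeff_mk]
  have h : ∑ k ∈ Finset.range (n+1),
      PowerSeries.coeff k (degExpPS lam 1) * PowerSeries.coeff n (degLogPS lam ^ k)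
      = Fsum lam n := by
    rw [Fsum]
    refine Finset.sum_congr rfl fun k _ => ?_
    rw [degExpPS, PowerSeries.coeff_mk]
  rw [h, Fval lam hlam n, map_add]
  rcases n with _ | _ | m <;>
    simp [PowerSeries.coeff_one, PowerSeries.coeff_X]

/-- Theorem 4 (second part): `∑_{k=0}^n β_{k,λ} S_{1,λ}(n,k) = λ^n (1)_{n+1,1/λ}/(n+1)`. -/
theorem sum_degBernoulli_S1 (lam : ℝ) (hlam : lam ≠ 0) (b : ℕ → ℝ)
    (hb : (PowerSeries.X : PowerSeries ℝ) =
      (degExpPS lam 1 - 1) * PowerSeries.mk (fun n => b n / n.factorial)) (n : ℕ) :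
    ∑ k ∈ Finset.range (n + 1), b k * S1 lam n k =
      lam ^ n * dfall 1 lam⁻¹ (n + 1) / ((n : ℝ) + 1) := by
  set B : PowerSeries ℝ := PowerSeries.mk (fun n => b n / n.factorial) with hB
  have hXB : degLogPS lam = PowerSeries.X * subL lam B := by
    calc degLogPS lam = subL lam PowerSeries.X := (subL_X lam).symm
      _ = subL lam ((degExpPS lam 1 - 1) * B) := by rw [← hb]
      _ = (subL lam (degExpPS lam 1) - subL lam 1) * subL lam B := by
          rw [subL_mul, subL_sub]
      _ = PowerSeries.X * subL lam B := by
          rw [subL_degExp lam hlam, subL_one]; ring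
  have hcoeff : PowerSeries.coeff (n+1) (degLogPS lam)
      = ∑ k ∈ Finset.range (n+1), b k / k.factorial * PowerSeries.coeff n (degLogPS lam ^ k) := by
    conv_lhs => rw [hXB]
    rw [PowerSeries.coeff_succ_X_mul, subL, PowerSeries.coeff_mk]
    refine Finset.sum_congr rfl fun k _ => ?_
    rw [hB, PowerSeries.coeff_mk]
  have hLHS : ∑ k ∈ Finset.range (n + 1), b k * S1 lam n k
      = (n.factorial : ℝ) * PowerSeries.coeff (n+1) (degLogPS lam) := by
    rw [hcoeff, Finset.mul_sum]
    refine Finset.sum_congr rfl fun k _ => ?_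
    rw [S1]
    field_simp
  rw [hLHS, coeff_degLog, if_neg (Nat.succ_ne_zero n), sub_zero,
    dfall_scale lam hlam (n+1)]
  have hfac : (((n+1):ℕ).factorial : ℝ) = ((n:ℝ)+1) * (n.factorial : ℝ) := by
    rw [Nat.factorial_succ]; push_cast; ring
  have h1 : ((n:ℝ)+1) ≠ 0 := by positivity
  have h2 : (n.factorial : ℝ) ≠ 0 := Nat.cast_ne_zero.mpr (Nat.factorial_ne_zero _)
  rw [hfac]
  field_simp
  ring
end

section
/- For n,k ≥ 0: ∑_{j=0}^{n} S_{2,λ}^{[2]}(n-j+k, 2k) C(n+k, j) β_{j,λ} = (-1)^k C(n+k,k) β_{n,λ} + (n+k)! ∑_{j=1}^{k} ((-1)^{k-j} / (j (k-j)! (n+j-1)!)) S_{2,λ}(n+j-1, j-1). -/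
/-- Theorem 5: identity involving the 2-truncated degenerate Stirling numbers of the second
kind (`truncS lam 2 k`), the degenerate Bernoulli numbers `β_{j,λ} = b j` (defined via `hb`),
and the degenerate Stirling numbers of the second kind. -/
theorem trunc2S_degBernoulli_identity (lam : ℝ) (hlam : lam ≠ 0) (b : ℕ → ℝ)
    (hb : (PowerSeries.X : PowerSeries ℝ) =
      (degExpPS lam 1 - 1) * PowerSeries.mk (fun n => b n / n.factorial)) (n k : ℕ) :
    ∑ j ∈ Finset.range (n + 1), truncS lam 2 k (n - j + k) * ((n + k).choose j : ℝ) * b j =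
      (-1 : ℝ) ^ k * ((n + k).choose k : ℝ) * b n +
        ((n + k).factorial : ℝ) *
          ∑ j ∈ Finset.Icc 1 k,
            (-1 : ℝ) ^ (k - j) /
              ((j : ℝ) * ((k - j).factorial : ℝ) * ((n + j - 1).factorial : ℝ)) *
              S2 lam (n + j - 1) (j - 1) := by
  classical
  set A : PowerSeries ℝ := degExpPS lam 1 - 1 with hA
  set Bs : PowerSeries ℝ := PowerSeries.mk (fun n => b n / n.factorial) with hBs
  have hd0 : dfall 1 lam 0 = 1 := by simp [dfall]
  have hd1 : dfall 1 lam 1 = 1 := by simp [dfall]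
  have hA0 : PowerSeries.coeff 0 A = 0 := by
    simp [hA, degExpPS, hd0, PowerSeries.coeff_mk]
  have hA1 : PowerSeries.coeff 1 A = 1 := by
    simp [hA, degExpPS, hd1, PowerSeries.coeff_mk]
  have htr : degExpPS lam 1 - truncPoly lam 2 = A - PowerSeries.X := by
    have h2 : truncPoly lam 2 = 1 + PowerSeries.X := by
      rw [truncPoly, Finset.sum_range_succ, Finset.sum_range_one]
      simp [hd0, hd1]
    rw [h2, hA]; ring
  have hXdvd : (PowerSeries.X : PowerSeries ℝ) ^ 2 ∣ (A - PowerSeries.X) := by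
    rw [PowerSeries.X_pow_dvd_iff]
    intro m hm
    interval_cases m
    · rw [map_sub, hA0]; simp
    · rw [map_sub, hA1]; simp
  have hvanish : ∀ m, m < 2 * k → PowerSeries.coeff m ((A - PowerSeries.X) ^ k) = 0 := by
    intro m hm
    have hdv : (PowerSeries.X : PowerSeries ℝ) ^ (2 * k) ∣ (A - PowerSeries.X) ^ k := by
      rw [pow_mul]; exact pow_dvd_pow_of_dvd hXdvd k
    exact (PowerSeries.X_pow_dvd_iff.mp hdv) m hm
  -- Step 1 : LHS as a single coefficient
  have key : ∑ j ∈ Finset.range (n + 1),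
        truncS lam 2 k (n - j + k) * ((n + k).choose j : ℝ) * b j
      = ∑ j ∈ Finset.range (n + k + 1),
          ((n + k).factorial : ℝ) * ((k.factorial : ℝ)⁻¹ *
            ((b j / j.factorial) * PowerSeries.coeff (n + k - j) ((A - PowerSeries.X) ^ k))) := by
    rw [← Finset.sum_subset (Finset.range_subset_range.mpr (by omega) :
        Finset.range (n + 1) ⊆ Finset.range (n + k + 1))]
    · apply Finset.sum_congr rfl
      intro j hj
      have hjn : j ≤ n := by simpa using Nat.lt_succ_iff.mp (Finset.mem_range.mp hj)
      have hje : n - j + k = n + k - j := by omega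
      have hfact : ((n + k).choose j : ℝ) * (j.factorial : ℝ) * ((n + k - j).factorial : ℝ)
          = ((n + k).factorial : ℝ) := by
        exact_mod_cast Nat.choose_mul_factorial_mul_factorial (by omega : j ≤ n + k)
      have hj0 : (j.factorial : ℝ) ≠ 0 := Nat.cast_ne_zero.mpr (Nat.factorial_ne_zero j)
      rw [truncS, htr, hje, ← hfact]
      field_simp
    · intro j hjmem hjnot
      have h1 : j ≤ n + k := by simpa using Nat.lt_succ_iff.mp (Finset.mem_range.mp hjmem)
      have h2 : n + 1 ≤ j := by simpa [Nat.lt_succ_iff] using hjnot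
      have : n + k - j < 2 * k := by omega
      rw [hvanish _ this]
      ring
  have key2 : ∑ j ∈ Finset.range (n + k + 1),
          ((n + k).factorial : ℝ) * ((k.factorial : ℝ)⁻¹ *
            ((b j / j.factorial) * PowerSeries.coeff (n + k - j) ((A - PowerSeries.X) ^ k)))
      = ((n + k).factorial : ℝ) * ((k.factorial : ℝ)⁻¹ *
          PowerSeries.coeff (n + k) (Bs * (A - PowerSeries.X) ^ k)) := by
    rw [PowerSeries.coeff_mul, Finset.Nat.sum_antidiagonal_eq_sum_range_succ_mk,
      Finset.mul_sum, Finset.mul_sum]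
    apply Finset.sum_congr rfl
    intro j hj
    simp [hBs, PowerSeries.coeff_mk]
  -- Step 2 : expand the coefficient
  have hABs : A * Bs = PowerSeries.X := hb.symm
  have hcoeff : PowerSeries.coeff (n + k) (Bs * (A - PowerSeries.X) ^ k)
      = (-1 : ℝ) ^ k * (b n / n.factorial)
        + ∑ j ∈ Finset.range k,
            (-1 : ℝ) ^ (k - (j + 1)) * (k.choose (j + 1) : ℝ) *
              PowerSeries.coeff (n + j) (A ^ j) := by
    rw [sub_pow, Finset.mul_sum, map_sum, Finset.sum_range_succ', add_comm]
    congr 1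
    · -- j = 0 term
      have hser : Bs * ((-1 : PowerSeries ℝ) ^ (0 + k) * A ^ 0 *
            PowerSeries.X ^ (k - 0) * ((k.choose 0 : ℕ) : PowerSeries ℝ))
          = PowerSeries.C ((-1 : ℝ) ^ k) * (PowerSeries.X ^ k * Bs) := by
        have h1 : ((-1 : PowerSeries ℝ)) = PowerSeries.C (-1) := by simp
        simp only [pow_zero, Nat.choose_zero_right, Nat.cast_one, mul_one, Nat.sub_zero,
          zero_add, one_mul]
        rw [h1, ← map_pow]
        ring
      rw [hser, PowerSeries.coeff_C_mul, PowerSeries.coeff_X_pow_mul]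
      simp [hBs, PowerSeries.coeff_mk]
    · apply Finset.sum_congr rfl
      intro j hj
      have hjk : j + 1 ≤ k := Finset.mem_range.mp hj
      -- series-level rewriting for index j+1
      have hser : Bs * ((-1 : PowerSeries ℝ) ^ (j + 1 + k) * A ^ (j + 1) *
            PowerSeries.X ^ (k - (j + 1)) * ((k.choose (j + 1) : ℕ) : PowerSeries ℝ))
          = PowerSeries.C ((-1 : ℝ) ^ (j + 1 + k) * (k.choose (j + 1) : ℝ)) *
              (PowerSeries.X ^ (k - j) * A ^ j) := by
        have h1 : ((-1 : PowerSeries ℝ)) = PowerSeries.C (-1) := by simp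
        have h2 : ((k.choose (j + 1) : ℕ) : PowerSeries ℝ)
            = PowerSeries.C ((k.choose (j + 1) : ℝ)) :=
          (map_natCast (PowerSeries.C (R := ℝ)) (k.choose (j + 1))).symm
        have h3 : A ^ (j + 1) * Bs = A ^ j * PowerSeries.X := by
          rw [pow_succ, mul_assoc, hABs]
        have h4 : (PowerSeries.X : PowerSeries ℝ) ^ (k - (j + 1)) * PowerSeries.X
            = (PowerSeries.X : PowerSeries ℝ) ^ (k - j) := by
          rw [← pow_succ]
          congr 1
          omega
        calc Bs * ((-1 : PowerSeries ℝ) ^ (j + 1 + k) * A ^ (j + 1) *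
              PowerSeries.X ^ (k - (j + 1)) * ((k.choose (j + 1) : ℕ) : PowerSeries ℝ))
            = ((-1 : PowerSeries ℝ) ^ (j + 1 + k) * ((k.choose (j + 1) : ℕ) : PowerSeries ℝ)) *
              (PowerSeries.X ^ (k - (j + 1)) * (A ^ (j + 1) * Bs)) := by ring
          _ = ((-1 : PowerSeries ℝ) ^ (j + 1 + k) * ((k.choose (j + 1) : ℕ) : PowerSeries ℝ)) *
              (PowerSeries.X ^ (k - j) * A ^ j) := by
                rw [h3]
                congr 1
                calc PowerSeries.X ^ (k - (j + 1)) * (A ^ j * PowerSeries.X)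
                    = (PowerSeries.X ^ (k - (j + 1)) * PowerSeries.X) * A ^ j := by ring
                  _ = PowerSeries.X ^ (k - j) * A ^ j := by rw [h4]
          _ = PowerSeries.C ((-1 : ℝ) ^ (j + 1 + k) * (k.choose (j + 1) : ℝ)) *
              (PowerSeries.X ^ (k - j) * A ^ j) := by
                rw [h1, h2, ← map_pow, ← map_mul]
      rw [hser, PowerSeries.coeff_C_mul]
      have hco : PowerSeries.coeff (n + k) (PowerSeries.X ^ (k - j) * A ^ j)
          = PowerSeries.coeff (n + j) (A ^ j) := by
        have : n + k = (n + j) + (k - j) := by omega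
        rw [this, PowerSeries.coeff_X_pow_mul]
      rw [hco]
      have hsign : ((-1 : ℝ)) ^ (j + 1 + k) = (-1 : ℝ) ^ (k - (j + 1)) := by
        rw [show j + 1 + k = (k - (j + 1)) + 2 * (j + 1) by omega, pow_add, pow_mul]
        simp
      rw [hsign]
  -- Step 3 : assemble
  rw [key, key2, hcoeff]
  have hIcc : ∑ j ∈ Finset.Icc 1 k,
        (-1 : ℝ) ^ (k - j) /
          ((j : ℝ) * ((k - j).factorial : ℝ) * ((n + j - 1).factorial : ℝ)) *
          S2 lam (n + j - 1) (j - 1)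
      = ∑ j ∈ Finset.range k,
          (-1 : ℝ) ^ (k - (j + 1)) /
            (((j : ℝ) + 1) * ((k - (j + 1)).factorial : ℝ) * ((n + j).factorial : ℝ)) *
            S2 lam (n + j) j := by
    rw [← Finset.Ico_add_one_right_eq_Icc, Finset.sum_Ico_eq_sum_range]
    apply Finset.sum_congr (by norm_num)
    intro j hj
    have h1 : n + (1 + j) - 1 = n + j := by omega
    have h2 : 1 + j - 1 = j := by omega
    rw [h1, h2]
    push_cast
    ring_nf
  rw [hIcc, mul_add, mul_add, Finset.mul_sum, Finset.mul_sum, Finset.mul_sum]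
  congr 1
  · -- constant terms
    have hfact : ((n + k).choose k : ℝ) * (k.factorial : ℝ) * (n.factorial : ℝ)
        = ((n + k).factorial : ℝ) := by
      have := Nat.choose_mul_factorial_mul_factorial (Nat.le_add_left k n)
      have h' : (n + k).choose k * k.factorial * (n + k - k).factorial = (n + k).factorial := this
      rw [Nat.add_sub_cancel] at h'
      exact_mod_cast h'
    have hk0 : (k.factorial : ℝ) ≠ 0 := Nat.cast_ne_zero.mpr (Nat.factorial_ne_zero k)
    have hn0 : (n.factorial : ℝ) ≠ 0 := Nat.cast_ne_zero.mpr (Nat.factorial_ne_zero n)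
    rw [← hfact]
    field_simp
  · apply Finset.sum_congr rfl
    intro j hj
    have hjk : j + 1 ≤ k := Finset.mem_range.mp hj
    have hS2 : S2 lam (n + j) j = ((n + j).factorial : ℝ) *
        ((j.factorial : ℝ)⁻¹ * PowerSeries.coeff (n + j) (A ^ j)) := by
      rw [S2, hA]
    rw [hS2]
    have hfact : ((k.choose (j + 1)) : ℝ) * (((j : ℝ) + 1) * (j.factorial : ℝ)) *
        ((k - (j + 1)).factorial : ℝ) = (k.factorial : ℝ) := by
      have h := Nat.choose_mul_factorial_mul_factorial hjk
      have h' : ((k.choose (j + 1)) : ℝ) * ((j + 1).factorial : ℝ) *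
          ((k - (j + 1)).factorial : ℝ) = (k.factorial : ℝ) := by exact_mod_cast h
      rw [Nat.factorial_succ] at h'
      push_cast at h'
      linarith [h']
    have hC0 : ((k.choose (j + 1)) : ℝ) ≠ 0 :=
      Nat.cast_ne_zero.mpr (Nat.choose_pos hjk).ne'
    have hj0 : (j.factorial : ℝ) ≠ 0 := Nat.cast_ne_zero.mpr (Nat.factorial_ne_zero j)
    have hnj0 : ((n + j).factorial : ℝ) ≠ 0 := Nat.cast_ne_zero.mpr (Nat.factorial_ne_zero _)
    have hkj0 : (((k - (j + 1)).factorial : ℕ) : ℝ) ≠ 0 :=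
      Nat.cast_ne_zero.mpr (Nat.factorial_ne_zero _)
    have hj1 : ((j : ℝ) + 1) ≠ 0 := by positivity
    set c := PowerSeries.coeff (n + j) (A ^ j) with hc
    rw [← hfact]
    field_simp
end

section
/- For n,k ≥ 0: ∑_{j=0}^{n} S_{2,λ}^{[2]}(n-j+k, 2k) C(n+k, j) β_{j,λ}^{(k)} = C(n+k,k) ∑_{j=0}^{k} C(k,j) (-1)^{k-j} β_{n,λ}^{(k-j)}, where β_{n,λ}^{(α)} are the higher-order degenerate Bernoulli numbers. -/
set_option maxHeartbeats 1000000

private lemma aux_term (E B B' X : PowerSeries ℝ) (k m : ℕ) (hmk : m ≤ k)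
    (hc : (E - 1) ^ m * B = X ^ m * B') :
    (-1 : PowerSeries ℝ) ^ (m + k) * (E - 1) ^ m * X ^ (k - m) * (k.choose m : PowerSeries ℝ) * B
      = X ^ k * (PowerSeries.C ((-1 : ℝ) ^ (m + k) * (k.choose m : ℝ)) * B') := by
  have hCfac : (PowerSeries.C) ((-1 : ℝ) ^ (m + k) * (k.choose m : ℝ))
      = (-1 : PowerSeries ℝ) ^ (m + k) * (k.choose m : PowerSeries ℝ) := by
    simp [map_mul, map_pow]
  rw [hCfac]
  calc (-1 : PowerSeries ℝ) ^ (m + k) * (E - 1) ^ m * X ^ (k - m) * (k.choose m : PowerSeries ℝ) * B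
      = ((-1) ^ (m + k) * (k.choose m : PowerSeries ℝ) * X ^ (k - m)) * ((E - 1) ^ m * B) := by ring
    _ = ((-1) ^ (m + k) * (k.choose m : PowerSeries ℝ) * X ^ (k - m)) * (X ^ m * B') := by rw [hc]
    _ = (X ^ (k - m) * X ^ m) * ((-1) ^ (m + k) * (k.choose m : PowerSeries ℝ) * B') := by ring
    _ = X ^ k * ((-1) ^ (m + k) * (k.choose m : PowerSeries ℝ) * B') := by
        rw [← pow_add]; congr 2; omega

private lemma aux_main (E X : PowerSeries ℝ) (B : ℕ → PowerSeries ℝ) (k : ℕ)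
    (hcancel : ∀ m ≤ k, (E - 1) ^ m * B k = X ^ m * B (k - m)) :
    (E - 1 - X) ^ k * B k
      = X ^ k * ∑ m ∈ Finset.range (k + 1),
          PowerSeries.C ((-1 : ℝ) ^ (m + k) * (k.choose m : ℝ)) * B (k - m) := by
  rw [sub_pow, Finset.sum_mul, Finset.mul_sum]
  refine Finset.sum_congr rfl fun m hm => ?_
  exact aux_term E (B k) (B (k - m)) X k m (Nat.lt_succ_iff.mp (Finset.mem_range.mp hm))
    (hcancel m (Nat.lt_succ_iff.mp (Finset.mem_range.mp hm)))

/-- Theorem 7: identity relating the 2-truncated degenerate Stirling numbers of the second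
kind and the higher-order degenerate Bernoulli numbers `β_{n,λ}^{(α)} = b α n`
(defined via the generating relation `hb`). -/
theorem trunc2S_higherDegBernoulli_identity (lam : ℝ) (hlam : lam ≠ 0) (b : ℕ → ℕ → ℝ)
    (hb : ∀ α : ℕ, (PowerSeries.X : PowerSeries ℝ) ^ α =
      (degExpPS lam 1 - 1) ^ α * PowerSeries.mk (fun n => b α n / n.factorial)) (n k : ℕ) :
    ∑ j ∈ Finset.range (n + 1), truncS lam 2 k (n - j + k) * ((n + k).choose j : ℝ) * b k j =
      ((n + k).choose k : ℝ) *
        ∑ j ∈ Finset.range (k + 1), (k.choose j : ℝ) * (-1 : ℝ) ^ (k - j) * b (k - j) n := by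
  classical
  set E : PowerSeries ℝ := degExpPS lam 1 with hE
  set X : PowerSeries ℝ := PowerSeries.X with hX
  set B : ℕ → PowerSeries ℝ := fun α => PowerSeries.mk fun n => b α n / n.factorial with hB
  have hd0 : dfall 1 lam 0 = 1 := by simp [dfall]
  have hd1 : dfall 1 lam 1 = 1 := by simp [dfall]
  have hT : truncPoly lam 2 = 1 + X := by
    rw [truncPoly, Finset.sum_range_succ, Finset.sum_range_one]
    simp [hd0, hd1, hX]
  have hE1c : PowerSeries.coeff 1 E = 1 := by simp [hE, degExpPS, hd1]
  have hE0c : PowerSeries.coeff 0 E = 1 := by simp [hE, degExpPS, hd0]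
  have hEne : E - 1 ≠ 0 := by
    intro h
    have h1 := congrArg (PowerSeries.coeff 1) h
    simp [map_sub, hE1c, PowerSeries.coeff_one] at h1
  have hsub : E - truncPoly lam 2 = E - 1 - X := by rw [hT]; ring
  set L : PowerSeries ℝ := (E - truncPoly lam 2) ^ k with hL
  have hdvd : X ^ 2 ∣ (E - 1 - X) := by
    rw [hX, PowerSeries.X_pow_dvd_iff]
    intro m hm
    interval_cases m <;> simp [map_sub, hE0c, hE1c, PowerSeries.coeff_one]
  have hvan : ∀ m < 2 * k, PowerSeries.coeff m L = 0 := by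
    intro m hm
    have h2 : X ^ (2 * k) ∣ (E - 1 - X) ^ k := by
      rw [pow_mul]; exact pow_dvd_pow_of_dvd hdvd k
    rw [hL, hsub]
    rw [hX, PowerSeries.X_pow_dvd_iff] at h2
    exact h2 m hm
  have hcancel : ∀ m ≤ k, (E - 1) ^ m * B k = X ^ m * B (k - m) := by
    intro m hm
    apply mul_left_cancel₀ (pow_ne_zero (k - m) hEne)
    calc (E - 1) ^ (k - m) * ((E - 1) ^ m * B k)
        = (E - 1) ^ k * B k := by rw [← mul_assoc, ← pow_add]; congr 3; omega
      _ = X ^ k := (hb k).symm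
      _ = X ^ m * X ^ (k - m) := by rw [← pow_add]; congr 1; omega
      _ = X ^ m * ((E - 1) ^ (k - m) * B (k - m)) := by rw [← hb (k - m)]
      _ = (E - 1) ^ (k - m) * (X ^ m * B (k - m)) := by ring
  set G : PowerSeries ℝ := ∑ m ∈ Finset.range (k + 1),
      PowerSeries.C ((-1 : ℝ) ^ (m + k) * (k.choose m : ℝ)) * B (k - m) with hG
  have hmain : L * B k = X ^ k * G := by
    rw [hL, hsub]; exact aux_main E X B k hcancel
  -- coefficient extraction at n + k
  have hcoeffL : PowerSeries.coeff (n + k) (L * B k)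
      = ∑ j ∈ Finset.range (n + k + 1), (b k j / j.factorial) * PowerSeries.coeff (n + k - j) L := by
    rw [mul_comm, PowerSeries.coeff_mul,
      Finset.Nat.sum_antidiagonal_eq_sum_range_succ_mk]
    refine Finset.sum_congr rfl fun j hj => ?_
    simp [hB]
  have hcoeffR : PowerSeries.coeff (n + k) (X ^ k * G)
      = ∑ m ∈ Finset.range (k + 1),
          ((-1 : ℝ) ^ (m + k) * (k.choose m : ℝ)) * (b (k - m) n / n.factorial) := by
    rw [hX, PowerSeries.coeff_X_pow_mul G k n, hG, map_sum]
    refine Finset.sum_congr rfl fun m hm => ?_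
    rw [PowerSeries.coeff_C_mul]
    simp [hB]
  have hcoeff : ∑ j ∈ Finset.range (n + k + 1),
        (b k j / j.factorial) * PowerSeries.coeff (n + k - j) L
      = ∑ m ∈ Finset.range (k + 1),
          ((-1 : ℝ) ^ (m + k) * (k.choose m : ℝ)) * (b (k - m) n / n.factorial) := by
    rw [← hcoeffL, ← hcoeffR, hmain]
  -- LHS rewriting
  have hLHS : ∑ j ∈ Finset.range (n + 1), truncS lam 2 k (n - j + k) * ((n + k).choose j : ℝ) * b k j
      = ((n + k).factorial : ℝ) * ((k.factorial : ℝ)⁻¹) *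
        ∑ j ∈ Finset.range (n + 1), (b k j / j.factorial) * PowerSeries.coeff (n + k - j) L := by
    rw [Finset.mul_sum]
    refine Finset.sum_congr rfl fun j hj => ?_
    have hjn : j ≤ n := Nat.lt_succ_iff.mp (Finset.mem_range.mp hj)
    have hidx : n - j + k = n + k - j := by omega
    have hch : ((n + k).choose j : ℝ) * (j.factorial : ℝ) * ((n + k - j).factorial : ℝ)
        = ((n + k).factorial : ℝ) := by
      exact_mod_cast congrArg (Nat.cast (R := ℝ))
        (Nat.choose_mul_factorial_mul_factorial (show j ≤ n + k by omega))
    rw [truncS, hidx, ← hE, ← hL]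
    have hjf : (j.factorial : ℝ) ≠ 0 := Nat.cast_ne_zero.mpr j.factorial_ne_zero
    rw [← hch]
    field_simp
  have hext : ∑ j ∈ Finset.range (n + 1), (b k j / j.factorial) * PowerSeries.coeff (n + k - j) L
      = ∑ j ∈ Finset.range (n + k + 1), (b k j / j.factorial) * PowerSeries.coeff (n + k - j) L := by
    apply Finset.sum_subset
    · exact Finset.range_subset_range.mpr (by omega)
    · intro j hj hj'
      have h1 : j ≤ n + k := Nat.lt_succ_iff.mp (Finset.mem_range.mp hj)
      have h2 : n + 1 ≤ j := by
        by_contra h; exact hj' (Finset.mem_range.mpr (by omega))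
      have hlt : n + k - j < 2 * k := by omega
      rw [hvan _ hlt, mul_zero]
  have hRHS : ((n + k).choose k : ℝ) *
        ∑ j ∈ Finset.range (k + 1), (k.choose j : ℝ) * (-1 : ℝ) ^ (k - j) * b (k - j) n
      = ((n + k).factorial : ℝ) * ((k.factorial : ℝ)⁻¹) *
        ∑ m ∈ Finset.range (k + 1),
          ((-1 : ℝ) ^ (m + k) * (k.choose m : ℝ)) * (b (k - m) n / n.factorial) := by
    rw [Finset.mul_sum, Finset.mul_sum]
    refine Finset.sum_congr rfl fun m hm => ?_
    have hmk : m ≤ k := Nat.lt_succ_iff.mp (Finset.mem_range.mp hm)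
    have hsign : (-1 : ℝ) ^ (m + k) = (-1 : ℝ) ^ (k - m) := by
      rw [show m + k = (k - m) + 2 * m by omega, pow_add, pow_mul]
      norm_num
    have hch2 : ((n + k).choose k : ℝ) * (k.factorial : ℝ) * (n.factorial : ℝ)
        = ((n + k).factorial : ℝ) := by
      have h := Nat.choose_mul_factorial_mul_factorial (show k ≤ n + k by omega)
      rw [Nat.add_sub_cancel] at h
      exact_mod_cast congrArg (Nat.cast (R := ℝ)) h
    rw [hsign, ← hch2]
    have hnf : (n.factorial : ℝ) ≠ 0 := Nat.cast_ne_zero.mpr n.factorial_ne_zero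
    field_simp
  rw [hLHS, hext, hcoeff, hRHS]
end
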